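/- arXiv:1901.09347 — 2 statements merged into one kernel-verified Lean document; each statement's English description precedes it below -/
import Mathlib

section
/- (Ostrowski–Taussky) If X and Y are real m×m matrices with X symmetric positive definite and Y symmetric, then |det(X + iY)| ≥ det(X) > 0; in particular X + iY is invertible. -/
open Complex Matrix

lemma aux_one_le_abs_det {n : Type*} [Fintype n] [DecidableEq n]
    (A : Matrix n n ℂ) (hA : A.IsHermitian) :
    1 ≤ ‖(1 + Complex.I • A).det‖ := by
  set U := (hA.eigenvectorUnitary : Matrix n n ℂ) with hUdef
  have hU : U * star U = 1 := Matrix.mem_unitaryGroup_iff.mp hA.eigenvectorUnitary.2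
  have key : (1 : Matrix n n ℂ) + Complex.I • A
      = U * (1 + Complex.I • diagonal (RCLike.ofReal ∘ hA.eigenvalues)) * star U := by
    rw [mul_add, add_mul, mul_one, hU, mul_smul_comm, smul_mul_assoc]
    congr 1
    conv_lhs => rw [hA.spectral_theorem, Unitary.conjStarAlgAut_apply]
  rw [key, det_mul_right_comm, hU, one_mul]
  have hdiag : (1 : Matrix n n ℂ) + Complex.I • diagonal (RCLike.ofReal ∘ hA.eigenvalues)
      = diagonal (fun i => 1 + Complex.I * (hA.eigenvalues i : ℂ)) := by
    ext i j
    by_cases h : i = j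
    · subst h
      simp [Matrix.one_apply_eq, Matrix.diagonal_apply_eq]
    · simp [Matrix.one_apply_ne h, Matrix.diagonal_apply_ne _ h]
  rw [hdiag, det_diagonal, norm_prod]
  have hterm : ∀ i, (1 : ℝ) ≤ ‖1 + Complex.I * (hA.eigenvalues i : ℂ)‖ := by
    intro i
    have hre : (1 + Complex.I * (hA.eigenvalues i : ℂ)).re = 1 := by simp
    calc (1 : ℝ) = |(1 + Complex.I * (hA.eigenvalues i : ℂ)).re| := by rw [hre]; simp
      _ ≤ ‖1 + Complex.I * (hA.eigenvalues i : ℂ)‖ := Complex.abs_re_le_norm _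
  calc (1 : ℝ) = ∏ _i : n, (1 : ℝ) := by simp
    _ ≤ ∏ i : n, ‖1 + Complex.I * (hA.eigenvalues i : ℂ)‖ :=
        Finset.prod_le_prod (fun i _ => zero_le_one) (fun i _ => hterm i)

theorem stmt_7 (m : ℕ) (X Y : Matrix (Fin m) (Fin m) ℝ)
    (hX : X.PosDef) (hY : Y.IsSymm) :
    X.det ≤ ‖(X.map Complex.ofReal + Complex.I • Y.map Complex.ofReal).det‖ ∧
    0 < X.det ∧
    IsUnit (X.map Complex.ofReal + Complex.I • Y.map Complex.ofReal) := by
  have hdetX : 0 < X.det := hX.det_pos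
  -- real square root of X
  set S : Matrix (Fin m) (Fin m) ℝ := by open scoped MatrixOrder in exact CFC.sqrt X with hSdef
  have hSsq : S * S = X := by
    open scoped MatrixOrder in exact CFC.sqrt_mul_sqrt_self X hX.posSemidef.nonneg
  have hSherm : S.IsHermitian := by
    open scoped MatrixOrder in exact (CFC.sqrt_nonneg X).posSemidef.1
  have hSsymm : ∀ i j, S i j = S j i := by
    intro i j
    have := congrFun (congrFun hSherm j) i
    simpa [Matrix.conjTranspose_apply] using this
  have hYsymm : ∀ i j, Y i j = Y j i := by
    intro i j
    simpa using congrFun (congrFun hY j) i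
  have hdetS : S.det * S.det = X.det := by rw [← det_mul, hSsq]
  have hdetSne : S.det ≠ 0 := by
    intro h; rw [h, mul_zero] at hdetS; exact absurd hdetS.symm hdetX.ne'
  -- complex versions
  set Sc : Matrix (Fin m) (Fin m) ℂ := S.map Complex.ofReal with hScdef
  set Yc : Matrix (Fin m) (Fin m) ℂ := Y.map Complex.ofReal with hYcdef
  have hmapmul : ∀ P Q : Matrix (Fin m) (Fin m) ℝ,
      (P * Q).map Complex.ofReal = P.map Complex.ofReal * Q.map Complex.ofReal := fun P Q =>
    Matrix.map_mul (f := Complex.ofRealHom)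
  have hdetSc : Sc.det = (S.det : ℂ) := (RingHom.map_det Complex.ofRealHom S).symm
  have hdetScne : Sc.det ≠ 0 := by
    rw [hdetSc]; exact_mod_cast hdetSne
  have hScUnit : IsUnit Sc.det := isUnit_iff_ne_zero.mpr hdetScne
  have hScinv : Sc * Sc⁻¹ = 1 := Matrix.mul_nonsing_inv _ hScUnit
  have hScinv' : Sc⁻¹ * Sc = 1 := Matrix.nonsing_inv_mul _ hScUnit
  have hScherm : Sc.IsHermitian := by
    ext i j
    simp only [conjTranspose_apply, hScdef, map_apply, Complex.star_def, Complex.conj_ofReal]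
    exact congrArg Complex.ofReal (hSsymm j i)
  have hYcherm : Yc.IsHermitian := by
    ext i j
    simp only [conjTranspose_apply, hYcdef, map_apply, Complex.star_def, Complex.conj_ofReal]
    exact congrArg Complex.ofReal (hYsymm j i)
  set A : Matrix (Fin m) (Fin m) ℂ := Sc⁻¹ * Yc * Sc⁻¹ with hAdef
  have hAherm : A.IsHermitian := by
    rw [hAdef]
    unfold Matrix.IsHermitian
    rw [conjTranspose_mul, conjTranspose_mul, hScherm.inv.eq, hYcherm.eq]
    rw [mul_assoc]
  have hfact : X.map Complex.ofReal + Complex.I • Yc = Sc * (1 + Complex.I • A) * Sc := by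
    rw [mul_add, add_mul, mul_one, mul_smul_comm, smul_mul_assoc]
    congr 1
    · rw [← hmapmul, hSsq]
    · congr 1
      simp only [hAdef, ← mul_assoc]
      rw [hScinv, one_mul, mul_assoc, hScinv', mul_one]
  have hone : (1 : ℝ) ≤ ‖(1 + Complex.I • A).det‖ := aux_one_le_abs_det A hAherm
  have hSS : |S.det| * |S.det| = X.det := by
    rw [← abs_mul, hdetS, abs_of_pos hdetX]
  have habs : ‖(X.map Complex.ofReal + Complex.I • Yc).det‖
      = X.det * ‖(1 + Complex.I • A).det‖ := by
    rw [hfact, det_mul, det_mul, hdetSc, norm_mul, norm_mul, Complex.norm_real, Real.norm_eq_abs,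
      mul_right_comm, hSS]
  refine ⟨?_, hdetX, ?_⟩
  · rw [habs]
    nlinarith [hdetX, hone]
  · rw [Matrix.isUnit_iff_isUnit_det, isUnit_iff_ne_zero]
    intro h
    rw [h, norm_zero] at habs
    nlinarith [hdetX, hone]
end

section
/- Let v be a real symmetric m×m matrix with eigenvalues λ₁,…,λ_m. Then ∫₀¹ tr((I_m - 2tiv)^{-1}(2iv)) dt = -∑_{j=1}^m Log(1 - 2iλ_j), where Log is the principal branch of the complex logarithm (well defined since Re(1 - 2iλ_j) = 1 > 0). -/
open Complex Matrix MeasureTheory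

lemma denom_ne (lam t : ℝ) : (1 - 2 * t * Complex.I * lam : ℂ) ≠ 0 := by
  intro h
  have := congrArg Complex.re h
  simp [Complex.ext_iff] at this

lemma denom_slit (lam t : ℝ) : (1 - 2 * t * Complex.I * lam : ℂ) ∈ Complex.slitPlane := by
  left; simp

lemma scalar_integrable (lam : ℝ) : IntervalIntegrable
    (fun t : ℝ => (2 * Complex.I * lam) / (1 - 2 * t * Complex.I * lam))
    MeasureTheory.volume 0 1 := by
  apply Continuous.intervalIntegrable
  exact continuous_const.div (by continuity) fun t => denom_ne lam t

lemma scalar_int (lam : ℝ) :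
    ∫ t in (0:ℝ)..1, (2 * Complex.I * lam) / (1 - 2 * t * Complex.I * lam) =
      - Complex.log (1 - 2 * Complex.I * lam) := by
  have hd : ∀ t ∈ Set.uIcc (0:ℝ) 1, HasDerivAt
      (fun t : ℝ => -Complex.log (1 - 2 * t * Complex.I * lam))
      ((2 * Complex.I * lam) / (1 - 2 * t * Complex.I * lam)) t := by
    intro t _
    have h0 : HasDerivAt (fun t : ℝ => (t : ℂ)) 1 t := Complex.ofRealCLM.hasDerivAt
    have h1 : HasDerivAt (fun t : ℝ => (1 - 2 * t * Complex.I * lam : ℂ))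
        (-(2 * Complex.I * lam)) t := by
      simpa [mul_assoc] using ((h0.const_mul (2:ℂ)).mul_const (Complex.I * lam)).const_sub 1
    have := (h1.clog_real (denom_slit lam t)).neg
    rw [neg_div, neg_neg] at this
    exact this
  rw [intervalIntegral.integral_eq_sub_of_hasDerivAt hd (scalar_integrable lam)]
  simp

theorem stmt_15 (m : ℕ) (v : Matrix (Fin m) (Fin m) ℝ) (hv : v.IsHermitian) :
    ∫ t in (0:ℝ)..1,
        (((1 : Matrix (Fin m) (Fin m) ℂ) - (2 * t : ℂ) • Complex.I • v.map Complex.ofReal)⁻¹ *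
          ((2 : ℂ) • Complex.I • v.map Complex.ofReal)).trace =
      -∑ j, Complex.log (1 - 2 * Complex.I * (hv.eigenvalues j : ℂ)) := by
  classical
  set U : Matrix (Fin m) (Fin m) ℝ := (hv.eigenvectorUnitary : Matrix (Fin m) (Fin m) ℝ) with hU
  set UC : Matrix (Fin m) (Fin m) ℂ := U.map Complex.ofReal with hUC
  have hstar : (star U).map Complex.ofReal = UCᴴ := by
    rw [hUC]
    exact (Matrix.conjTranspose_map Complex.ofReal (fun x => (Complex.conj_ofReal x).symm)).symm ▸
      (Matrix.conjTranspose_map (A := U) Complex.ofReal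
        (fun x => by simp [Complex.conj_ofReal]))
  have hmap_mul : ∀ (A B : Matrix (Fin m) (Fin m) ℝ),
      (A * B).map Complex.ofReal = A.map Complex.ofReal * B.map Complex.ofReal := by
    intro A B; exact Matrix.map_mul (f := Complex.ofRealHom)
  have hunit : UC * UCᴴ = 1 := by
    have h1 : U * star U = 1 := Matrix.mem_unitaryGroup_iff.mp hv.eigenvectorUnitary.2
    have h2 := congrArg (fun M => Matrix.map M Complex.ofReal) h1
    rw [hmap_mul, hstar] at h2
    rw [h2, Matrix.map_one _ Complex.ofReal_zero Complex.ofReal_one]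
  have hunit' : UCᴴ * UC = 1 := mul_eq_one_comm.mp hunit
  have hcan1 : ∀ X : Matrix (Fin m) (Fin m) ℂ, UCᴴ * (UC * X) = X := by
    intro X; rw [← Matrix.mul_assoc, hunit', Matrix.one_mul]
  have hspec : v.map Complex.ofReal =
      UC * Matrix.diagonal (fun j => (hv.eigenvalues j : ℂ)) * UCᴴ := by
    have h2 := congrArg (fun M => Matrix.map M Complex.ofReal) hv.spectral_theorem
    rw [Unitary.conjStarAlgAut_apply] at h2
    rw [hmap_mul, hmap_mul, hstar] at h2
    rw [h2]
    congr 2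
    rw [Matrix.diagonal_map Complex.ofReal_zero]
    rfl
  have hsmul : ∀ c : ℂ, c • (v.map Complex.ofReal) =
      UC * Matrix.diagonal (fun j => c * (hv.eigenvalues j : ℂ)) * UCᴴ := by
    intro c
    rw [hspec, ← Matrix.smul_mul, ← Matrix.mul_smul, ← Matrix.diagonal_smul]
    rfl
  have hone : (1 : Matrix (Fin m) (Fin m) ℂ) =
      UC * Matrix.diagonal (fun _ : Fin m => (1:ℂ)) * UCᴴ := by
    rw [Matrix.diagonal_one, Matrix.mul_one, hunit]
  have hkey : ∀ c : ℂ, (1 : Matrix (Fin m) (Fin m) ℂ) - c • (v.map Complex.ofReal) =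
      UC * Matrix.diagonal (fun j => 1 - c * (hv.eigenvalues j : ℂ)) * UCᴴ := by
    intro c
    rw [hsmul c]
    nth_rewrite 1 [hone]
    rw [← Matrix.sub_mul, ← Matrix.mul_sub, Matrix.diagonal_sub]
  -- per-t trace identity
  have htr : ∀ t : ℝ,
      (((1 : Matrix (Fin m) (Fin m) ℂ) - (2 * t : ℂ) • Complex.I • v.map Complex.ofReal)⁻¹ *
          ((2 : ℂ) • Complex.I • v.map Complex.ofReal)).trace =
      ∑ j, (2 * Complex.I * (hv.eigenvalues j : ℂ)) /
        (1 - 2 * t * Complex.I * (hv.eigenvalues j : ℂ)) := by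
    intro t
    have hA : (1 : Matrix (Fin m) (Fin m) ℂ) - (2 * t : ℂ) • Complex.I • v.map Complex.ofReal =
        UC * Matrix.diagonal (fun j => 1 - 2 * t * Complex.I * (hv.eigenvalues j : ℂ)) * UCᴴ := by
      rw [smul_smul, hkey]
    have hB : (2 : ℂ) • Complex.I • v.map Complex.ofReal =
        UC * Matrix.diagonal (fun j => 2 * Complex.I * (hv.eigenvalues j : ℂ)) * UCᴴ := by
      rw [smul_smul, hsmul]
    have hinv : ((1 : Matrix (Fin m) (Fin m) ℂ) -
        (2 * t : ℂ) • Complex.I • v.map Complex.ofReal)⁻¹ =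
        UC * Matrix.diagonal (fun j => (1 - 2 * t * Complex.I * (hv.eigenvalues j : ℂ))⁻¹) * UCᴴ := by
      apply Matrix.inv_eq_right_inv
      rw [hA]
      simp only [Matrix.mul_assoc]
      rw [hcan1, ← Matrix.mul_assoc (Matrix.diagonal _), Matrix.diagonal_mul_diagonal]
      have : (fun j => (1 - 2 * t * Complex.I * (hv.eigenvalues j : ℂ)) *
          (1 - 2 * t * Complex.I * (hv.eigenvalues j : ℂ))⁻¹) = fun _ : Fin m => (1:ℂ) := by
        funext j
        exact mul_inv_cancel₀ (denom_ne (hv.eigenvalues j) t)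
      rw [this, Matrix.diagonal_one, Matrix.one_mul, hunit]
    rw [hinv, hB]
    simp only [Matrix.mul_assoc]
    rw [hcan1, ← Matrix.mul_assoc (Matrix.diagonal _), Matrix.diagonal_mul_diagonal]
    rw [Matrix.trace_mul_comm, Matrix.mul_assoc, hunit', Matrix.mul_one, Matrix.trace_diagonal]
    congr 1
    funext j
    rw [inv_mul_eq_div]
  rw [intervalIntegral.integral_congr (g := fun t => ∑ j, (2 * Complex.I * (hv.eigenvalues j : ℂ)) /
        (1 - 2 * t * Complex.I * (hv.eigenvalues j : ℂ))) (fun t _ => htr t)]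
  rw [intervalIntegral.integral_finset_sum]
  · rw [← Finset.sum_neg_distrib]
    exact Finset.sum_congr rfl fun j _ => scalar_int (hv.eigenvalues j)
  · intro j _
    exact scalar_integrable (hv.eigenvalues j)
end
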